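/- The pseudo-true parameter converges to the true parameter as the component separation vanishes: for each ρ > 0, let θ̄(ρ) be any nonnegative minimizer of θ ↦ KL(g*_ρ ‖ g_θ); then θ̄(ρ) → |θ*| as ρ → 0⁺. (Equivalently, the neighborhood of θ* containing the KL projection shrinks as ρ decreases to zero.) -/

import Mathlib

open MeasureTheory

noncomputable section

/-- Standard normal density `φ`. -/
def stdPdf (x : ℝ) : ℝ := (Real.sqrt (2 * Real.pi))⁻¹ * Real.exp (-x ^ 2 / 2)

/-- True density: three-component Gaussian mixture with unit variances,
`g*(x) = (1/4)φ(x − θ*(−ρ−1)) + (1/2)φ(x − θ*) + (1/4)φ(x − θ*(ρ−1))`. -/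
def gstar (θs ρ x : ℝ) : ℝ :=
  (1 / 4) * stdPdf (x - θs * (-ρ - 1)) + (1 / 2) * stdPdf (x - θs)
    + (1 / 4) * stdPdf (x - θs * (ρ - 1))

/-- Fitted two-component symmetric model `g_θ(x) = (1/2)φ(x−θ) + (1/2)φ(x+θ)`. -/
def gmod (θ x : ℝ) : ℝ := (1 / 2) * stdPdf (x - θ) + (1 / 2) * stdPdf (x + θ)

/-- The probability measure on `ℝ` with Lebesgue density `g*`. -/
def gstarMeasure (θs ρ : ℝ) : Measure ℝ :=
  volume.withDensity fun x => ENNReal.ofReal (gstar θs ρ x)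

/-- Kullback–Leibler divergence `KL(g* ‖ g_θ)` between the measures with Lebesgue
densities `g*` and `g_θ`. -/
def klg (θs ρ θ : ℝ) : ℝ := ∫ x, gstar θs ρ x * Real.log (gstar θs ρ x / gmod θ x)

/-- Population EM operator `M(θ) = E_{X ∼ g*}[X tanh(θ X)]`. -/
def Mpop (θs ρ θ : ℝ) : ℝ := ∫ x, x * Real.tanh (θ * x) ∂(gstarMeasure θs ρ)

/-!
Since `g_θ(x) = φ(x) e^{-θ²/2} cosh(θx)`, we have
`KL(g*_ρ ‖ g_θ) = c(ρ) + θ²/2 - ∫ g*_ρ(x) log cosh(θx) dx` with `c(ρ)` independent of `θ`.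
The integral is at most `C|θ|` uniformly in `|ρ| ≤ 1` and is jointly continuous in `(ρ, θ)`, so the
minimizers stay in a compact interval and every cluster point of them as `ρ → 0⁺` minimizes the
limiting objective. At `ρ = 0` the true density is `g_{θ*}`, so by Gibbs' inequality these limiting
minimizers are exactly the `θ` with `g_θ = g_{θ*}`, that is `θ = ±θ*`.
-/

open Real Filter Topology Function

lemma stdPdf_eq_gaussianPDFReal : stdPdf = ProbabilityTheory.gaussianPDFReal 0 1 := by
  ext x
  simp [stdPdf, ProbabilityTheory.gaussianPDFReal]

lemma stdPdf_pos (x : ℝ) : 0 < stdPdf x := by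
  unfold stdPdf
  positivity

@[fun_prop]
lemma continuous_stdPdf : Continuous stdPdf := by
  unfold stdPdf
  fun_prop

lemma integrable_stdPdf : Integrable stdPdf :=
  stdPdf_eq_gaussianPDFReal ▸ ProbabilityTheory.integrable_gaussianPDFReal 0 1

lemma integral_stdPdf : ∫ x, stdPdf x = 1 := by
  rw [stdPdf_eq_gaussianPDFReal]
  exact ProbabilityTheory.integral_gaussianPDFReal_eq_one 0 one_ne_zero

lemma integrable_stdPdf_mul_abs : Integrable fun x => stdPdf x * |x| := by
  have h := ((integrable_mul_exp_neg_mul_sq (b := 1 / 2) (by norm_num)).norm).const_mul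
    (√(2 * π))⁻¹
  refine h.congr (ae_of_all _ fun x => ?_)
  simp only [stdPdf, norm_mul, Real.norm_eq_abs, Real.abs_exp]
  ring_nf

lemma stdPdf_sub (m x : ℝ) : stdPdf (x - m) = stdPdf x * exp (m * x - m ^ 2 / 2) := by
  unfold stdPdf
  rw [mul_assoc, ← exp_add]
  ring_nf

lemma gmod_eq_stdPdf_mul_cosh (θ x : ℝ) :
    gmod θ x = stdPdf x * exp (-θ ^ 2 / 2) * cosh (θ * x) := by
  rw [gmod, show x + θ = x - -θ by ring, stdPdf_sub, stdPdf_sub, cosh_eq,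
    show θ * x - θ ^ 2 / 2 = θ * x + -θ ^ 2 / 2 by ring,
    show -θ * x - (-θ) ^ 2 / 2 = -(θ * x) + -θ ^ 2 / 2 by ring, exp_add, exp_add]
  ring

lemma gmod_pos (θ x : ℝ) : 0 < gmod θ x := by
  rw [gmod_eq_stdPdf_mul_cosh]
  have := stdPdf_pos x
  positivity

lemma gstar_pos (θs ρ x : ℝ) : 0 < gstar θs ρ x := by
  unfold gstar
  have := stdPdf_pos (x - θs * (-ρ - 1))
  have := stdPdf_pos (x - θs)
  have := stdPdf_pos (x - θs * (ρ - 1))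
  positivity

lemma continuous_gmod (θ : ℝ) : Continuous (gmod θ) := by
  unfold gmod
  fun_prop

lemma continuous_gstar (θs ρ : ℝ) : Continuous (gstar θs ρ) := by
  unfold gstar
  fun_prop

lemma gstar_zero (θs : ℝ) : gstar θs 0 = gmod θs := by
  ext x
  simp only [gstar, gmod]
  ring_nf

lemma cosh_le_exp_abs (t : ℝ) : cosh t ≤ exp |t| := by
  rw [← cosh_abs, cosh_eq]
  have := exp_le_exp.2 (neg_le_self (abs_nonneg t))
  linarith

lemma abs_log_cosh_le (t : ℝ) : |log (cosh t)| ≤ |t| := by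
  rw [abs_of_nonneg (log_nonneg (one_le_cosh t))]
  calc log (cosh t) ≤ log (exp |t|) := log_le_log (cosh_pos t) (cosh_le_exp_abs t)
    _ = |t| := log_exp _

lemma exp_sq_half_mul_gmod (M x : ℝ) : exp (M ^ 2 / 2) * gmod M x = stdPdf x * cosh (M * x) := by
  rw [gmod_eq_stdPdf_mul_cosh, neg_div, exp_neg]
  field_simp

lemma stdPdf_sub_le_gmod {m M : ℝ} (hm : |m| ≤ M) (x : ℝ) :
    stdPdf (x - m) ≤ 2 * exp (M ^ 2 / 2) * gmod M x := by
  have hM : 0 ≤ M := (abs_nonneg m).trans hm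
  have hlin : m * x ≤ M * |x| := (le_abs_self _).trans
    (by rw [abs_mul]; exact mul_le_mul_of_nonneg_right hm (abs_nonneg x))
  have hexp : exp (m * x - m ^ 2 / 2) ≤ 2 * cosh (M * x) :=
    calc exp (m * x - m ^ 2 / 2) ≤ exp |M * x| := by
          rw [exp_le_exp, abs_mul, abs_of_nonneg hM]
          nlinarith [sq_nonneg m]
      _ ≤ 2 * cosh (M * x) := by
          rw [← cosh_abs (M * x), cosh_eq]
          linarith [exp_pos (-|M * x|)]
  rw [stdPdf_sub, mul_assoc, exp_sq_half_mul_gmod, mul_left_comm]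
  exact mul_le_mul_of_nonneg_left hexp (stdPdf_pos x).le

lemma abs_le_of_abs_mul_abs_add_one_le {a r M : ℝ} (h : |a| * (|r| + 1) ≤ M) : |a| ≤ M :=
  (le_mul_of_one_le_right (abs_nonneg a) (le_add_of_nonneg_left (abs_nonneg r))).trans h

lemma gstar_le_gmod {θs ρ M : ℝ} (hM : |θs| * (|ρ| + 1) ≤ M) (x : ℝ) :
    gstar θs ρ x ≤ 2 * exp (M ^ 2 / 2) * gmod M x := by
  have hmean : ∀ s : ℝ, |s| ≤ |ρ| + 1 → |θs * s| ≤ M := fun s hs => by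
    rw [abs_mul]; exact (mul_le_mul_of_nonneg_left hs (abs_nonneg θs)).trans hM
  have h₁ := stdPdf_sub_le_gmod (hmean (-ρ - 1) ((abs_sub _ _).trans (by simp))) x
  have h₂ := stdPdf_sub_le_gmod (abs_le_of_abs_mul_abs_add_one_le hM) x
  have h₃ := stdPdf_sub_le_gmod (hmean (ρ - 1) ((abs_sub _ _).trans (by simp))) x
  unfold gstar
  linarith

lemma MeasureTheory.Integrable.mul_of_abs_le_affine {g f : ℝ → ℝ} (hg : Integrable g)
    (hgx : Integrable fun x => g x * |x|) (hf : AEStronglyMeasurable f) {a b : ℝ}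
    (hfab : ∀ x, |f x| ≤ a + b * |x|) : Integrable fun x => g x * f x := by
  refine ((hg.norm.const_mul |a|).add (hgx.norm.const_mul |b|)).mono'
    (hg.aestronglyMeasurable.mul hf) (ae_of_all _ fun x => ?_)
  have hfx : |f x| ≤ |a| + |b| * |x| := (hfab x).trans (add_le_add (le_abs_self a)
    (mul_le_mul_of_nonneg_right (le_abs_self b) (abs_nonneg x)))
  simp only [norm_mul, Real.norm_eq_abs, abs_abs]
  calc |g x| * |f x| ≤ |g x| * (|a| + |b| * |x|) := mul_le_mul_of_nonneg_left hfx (abs_nonneg _)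
    _ = |a| * |g x| + |b| * (|g x| * |x|) := by ring

lemma integrable_stdPdf_sub_mul_abs (m : ℝ) : Integrable fun x => stdPdf (x - m) * |x| := by
  have h : Integrable fun y => stdPdf y * |y + m| :=
    integrable_stdPdf.mul_of_abs_le_affine integrable_stdPdf_mul_abs (by fun_prop)
      (a := |m|) (b := 1) fun y => by simpa [add_comm] using abs_add_le y m
  simpa using h.comp_sub_right m

lemma integrable_stdPdf_sub_mul (m : ℝ) {f : ℝ → ℝ} (hf : AEStronglyMeasurable f) {a b : ℝ}
    (hfab : ∀ x, |f x| ≤ a + b * |x|) : Integrable fun x => stdPdf (x - m) * f x :=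
  (integrable_stdPdf.comp_sub_right m).mul_of_abs_le_affine (integrable_stdPdf_sub_mul_abs m)
    hf hfab

lemma integrable_gstar_mul (θs ρ : ℝ) {f : ℝ → ℝ} (hf : AEStronglyMeasurable f) {a b : ℝ}
    (hfab : ∀ x, |f x| ≤ a + b * |x|) : Integrable fun x => gstar θs ρ x * f x := by
  simp only [gstar, add_mul, mul_assoc]
  exact (((integrable_stdPdf_sub_mul _ hf hfab).const_mul _).add
    ((integrable_stdPdf_sub_mul _ hf hfab).const_mul _)).add
    ((integrable_stdPdf_sub_mul _ hf hfab).const_mul _)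

lemma integrable_gmod_mul (θ : ℝ) {f : ℝ → ℝ} (hf : AEStronglyMeasurable f) {a b : ℝ}
    (hfab : ∀ x, |f x| ≤ a + b * |x|) : Integrable fun x => gmod θ x * f x := by
  have h : Integrable fun x => stdPdf (x + θ) * f x := by
    simpa using integrable_stdPdf_sub_mul (-θ) hf hfab
  simp only [gmod, add_mul, mul_assoc]
  exact ((integrable_stdPdf_sub_mul _ hf hfab).const_mul _).add (h.const_mul _)

lemma integrable_gstar (θs ρ : ℝ) : Integrable (gstar θs ρ) := by
  simpa using integrable_gstar_mul θs ρ aestronglyMeasurable_const (f := fun _ => 1)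
    (a := 1) (b := 0) (by simp)

lemma integrable_gmod (θ : ℝ) : Integrable (gmod θ) := by
  simpa using integrable_gmod_mul θ aestronglyMeasurable_const (f := fun _ => 1)
    (a := 1) (b := 0) (by simp)

lemma integrable_gmod_mul_abs (θ : ℝ) : Integrable fun x => gmod θ x * |x| :=
  integrable_gmod_mul θ (by fun_prop) (a := 0) (b := 1) (by simp)

lemma integral_stdPdf_sub (m : ℝ) : ∫ x, stdPdf (x - m) = 1 := by
  rw [integral_sub_right_eq_self stdPdf m, integral_stdPdf]

lemma integral_gstar (θs ρ : ℝ) : ∫ x, gstar θs ρ x = 1 := by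
  have hi (c m : ℝ) : Integrable fun x => c * stdPdf (x - m) :=
    (integrable_stdPdf.comp_sub_right m).const_mul c
  unfold gstar
  rw [integral_add ?_ (hi _ _), integral_add (hi _ _) (hi _ _)]
  · simp only [integral_const_mul, integral_stdPdf_sub]
    norm_num
  · exact (hi _ _).add (hi _ _)

lemma integral_gmod (θ : ℝ) : ∫ x, gmod θ x = 1 := by
  rw [← gstar_zero, integral_gstar]

lemma gstar_div_stdPdf_le {θs ρ M : ℝ} (hM : |θs| * (|ρ| + 1) ≤ M) (x : ℝ) :
    gstar θs ρ x / stdPdf x ≤ 2 * exp (M * |x|) := by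
  have hM₀ : 0 ≤ M := (abs_nonneg θs).trans (abs_le_of_abs_mul_abs_add_one_le hM)
  have hcosh := cosh_le_exp_abs (M * x)
  rw [abs_mul, abs_of_nonneg hM₀] at hcosh
  rw [div_le_iff₀ (stdPdf_pos x)]
  have := stdPdf_pos x
  calc gstar θs ρ x ≤ 2 * exp (M ^ 2 / 2) * gmod M x := gstar_le_gmod hM x
    _ = 2 * cosh (M * x) * stdPdf x := by rw [mul_assoc, exp_sq_half_mul_gmod]; ring
    _ ≤ 2 * exp (M * |x|) * stdPdf x := by gcongr

lemma exp_div_two_le_gstar_div_stdPdf (θs ρ x : ℝ) :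
    exp (θs * x - θs ^ 2 / 2) / 2 ≤ gstar θs ρ x / stdPdf x := by
  rw [le_div_iff₀ (stdPdf_pos x)]
  have := stdPdf_pos (x - θs * (-ρ - 1))
  have := stdPdf_pos (x - θs * (ρ - 1))
  have := stdPdf_sub θs x
  unfold gstar
  nlinarith

lemma abs_log_gstar_div_stdPdf_le {θs ρ M : ℝ} (hM : |θs| * (|ρ| + 1) ≤ M) (x : ℝ) :
    |log (gstar θs ρ x / stdPdf x)| ≤ (log 2 + M ^ 2 / 2) + M * |x| := by
  have hθs := abs_le_of_abs_mul_abs_add_one_le hM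
  have hratio : 0 < gstar θs ρ x / stdPdf x := div_pos (gstar_pos θs ρ x) (stdPdf_pos x)
  have hlog_le : log (gstar θs ρ x / stdPdf x) ≤ log 2 + M * |x| :=
    calc log (gstar θs ρ x / stdPdf x) ≤ log (2 * exp (M * |x|)) :=
          log_le_log hratio (gstar_div_stdPdf_le hM x)
      _ = log 2 + M * |x| := by rw [log_mul two_ne_zero (exp_ne_zero _), log_exp]
  have hlog_ge : θs * x - θs ^ 2 / 2 - log 2 ≤ log (gstar θs ρ x / stdPdf x) :=
    calc θs * x - θs ^ 2 / 2 - log 2 = log (exp (θs * x - θs ^ 2 / 2) / 2) := by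
          rw [log_div (exp_ne_zero _) two_ne_zero, log_exp]
      _ ≤ _ := log_le_log (by positivity) (exp_div_two_le_gstar_div_stdPdf θs ρ x)
  have hlin : -(M * |x|) ≤ θs * x := by
    have := neg_abs_le (θs * x)
    rw [abs_mul] at this
    nlinarith [abs_nonneg x]
  have hsq : θs ^ 2 ≤ M ^ 2 := by
    rw [← sq_abs θs]; exact pow_le_pow_left₀ (abs_nonneg θs) hθs 2
  have hlog2 : 0 ≤ log 2 := log_nonneg one_le_two
  rw [abs_le]
  constructor <;> nlinarith [abs_nonneg x]

lemma log_gstar_div_gmod (θs ρ θ x : ℝ) :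
    log (gstar θs ρ x / gmod θ x)
      = log (gstar θs ρ x / stdPdf x) + θ ^ 2 / 2 - log (cosh (θ * x)) := by
  have hφ := stdPdf_pos x
  have hg := gstar_pos θs ρ x
  rw [gmod_eq_stdPdf_mul_cosh, log_div hg.ne' (by positivity), log_div hg.ne' hφ.ne',
    log_mul (by positivity) (cosh_pos _).ne', log_mul hφ.ne' (exp_pos _).ne', log_exp]
  ring

lemma integrable_gstar_mul_log_div_stdPdf (θs ρ : ℝ) :
    Integrable fun x => gstar θs ρ x * log (gstar θs ρ x / stdPdf x) :=
  integrable_gstar_mul θs ρ (Measurable.aestronglyMeasurable (by unfold gstar; fun_prop))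
    (abs_log_gstar_div_stdPdf_le le_rfl)

lemma integrable_gstar_mul_log_cosh (θs ρ θ : ℝ) :
    Integrable fun x => gstar θs ρ x * log (cosh (θ * x)) :=
  integrable_gstar_mul θs ρ (Measurable.aestronglyMeasurable (by fun_prop)) (a := 0) (b := |θ|) fun x => by
    simpa [abs_mul] using abs_log_cosh_le (θ * x)

lemma integrable_gstar_mul_log_div_gmod (θs ρ θ : ℝ) :
    Integrable fun x => gstar θs ρ x * log (gstar θs ρ x / gmod θ x) := by
  simp_rw [log_gstar_div_gmod, mul_sub, mul_add]
  exact ((integrable_gstar_mul_log_div_stdPdf θs ρ).add ((integrable_gstar θs ρ).mul_const _)).sub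
    (integrable_gstar_mul_log_cosh θs ρ θ)

def klObjective (θs ρ θ : ℝ) : ℝ := θ ^ 2 / 2 - ∫ x, gstar θs ρ x * log (cosh (θ * x))

lemma klg_eq_add_klObjective (θs ρ θ : ℝ) :
    klg θs ρ θ = (∫ x, gstar θs ρ x * log (gstar θs ρ x / stdPdf x)) + klObjective θs ρ θ := by
  simp_rw [klg, klObjective, log_gstar_div_gmod, mul_sub, mul_add]
  rw [integral_sub ?_ (integrable_gstar_mul_log_cosh θs ρ θ),
    integral_add (integrable_gstar_mul_log_div_stdPdf θs ρ) ((integrable_gstar θs ρ).mul_const _),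
    integral_mul_const, integral_gstar]
  · ring
  · exact (integrable_gstar_mul_log_div_stdPdf θs ρ).add ((integrable_gstar θs ρ).mul_const _)

lemma klg_le_klg_iff {θs ρ θ θ' : ℝ} :
    klg θs ρ θ ≤ klg θs ρ θ' ↔ klObjective θs ρ θ ≤ klObjective θs ρ θ' := by
  simp only [klg_eq_add_klObjective, add_le_add_iff_left]

section Gibbs

variable {α : Type*} [MeasurableSpace α] {μ : Measure α} {p q : α → ℝ}

open InformationTheory

lemma integral_mul_log_div_eq (hq : ∀ x, q x ≠ 0) (hpi : Integrable p μ) (hqi : Integrable q μ)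
    (hint : Integrable (fun x => p x * log (p x / q x)) μ) :
    ∫ x, p x * log (p x / q x) ∂μ
      = ∫ x, q x * klFun (p x / q x) ∂μ + ((∫ x, p x ∂μ) - ∫ x, q x ∂μ) := by
  have hpt : ∀ x, q x * klFun (p x / q x) = p x * log (p x / q x) + q x - p x := fun x => by
    rw [klFun_apply]
    field_simp [hq x]
  simp_rw [hpt]
  rw [integral_sub ?_ hpi, integral_add hint hqi]
  · ring
  · exact hint.add hqi

lemma integral_mul_log_div_nonneg (hp : ∀ x, 0 ≤ p x) (hq : ∀ x, 0 < q x)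
    (hpi : Integrable p μ) (hqi : Integrable q μ)
    (hint : Integrable (fun x => p x * log (p x / q x)) μ) (hpq : ∫ x, q x ∂μ ≤ ∫ x, p x ∂μ) :
    0 ≤ ∫ x, p x * log (p x / q x) ∂μ := by
  rw [integral_mul_log_div_eq (fun x => (hq x).ne') hpi hqi hint]
  have hnonneg : 0 ≤ fun x => q x * klFun (p x / q x) := fun x =>
    mul_nonneg (hq x).le (klFun_nonneg (div_nonneg (hp x) (hq x).le))
  linarith [integral_nonneg (μ := μ) hnonneg]

lemma eq_of_integral_mul_log_div_eq_zero [TopologicalSpace α] [OpensMeasurableSpace α]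
    [μ.IsOpenPosMeasure] (hpc : Continuous p) (hqc : Continuous q) (hp : ∀ x, 0 ≤ p x)
    (hq : ∀ x, 0 < q x) (hpi : Integrable p μ) (hqi : Integrable q μ)
    (hint : Integrable (fun x => p x * log (p x / q x)) μ) (hpq : ∫ x, q x ∂μ ≤ ∫ x, p x ∂μ)
    (h : ∫ x, p x * log (p x / q x) ∂μ = 0) : p = q := by
  have hq₀ : ∀ x, q x ≠ 0 := fun x => (hq x).ne'
  have hnonneg : 0 ≤ fun x => q x * klFun (p x / q x) := fun x =>
    mul_nonneg (hq x).le (klFun_nonneg (div_nonneg (hp x) (hq x).le))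
  have hcont : Continuous fun x => q x * klFun (p x / q x) :=
    hqc.mul (continuous_klFun.comp (hpc.div hqc hq₀))
  have hkl_int : Integrable (fun x => q x * klFun (p x / q x)) μ := by
    refine ((hint.add hqi).sub hpi).congr (ae_of_all _ fun x => ?_)
    simp only [Pi.add_apply, Pi.sub_apply, klFun_apply]
    field_simp [hq₀ x]
  have hkl_zero : ∫ x, q x * klFun (p x / q x) ∂μ = 0 := by
    have := integral_mul_log_div_eq hq₀ hpi hqi hint
    linarith [integral_nonneg (μ := μ) hnonneg]
  have hzero := (hcont.ae_eq_iff_eq μ continuous_const).1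
    ((integral_eq_zero_iff_of_nonneg hnonneg hkl_int).1 hkl_zero)
  funext x
  have hx : q x * klFun (p x / q x) = 0 := congrFun hzero x
  rw [mul_eq_zero, or_iff_right (hq₀ x), klFun_eq_zero_iff (div_nonneg (hp x) (hq x).le),
    div_eq_one_iff_eq (hq₀ x)] at hx
  exact hx

end Gibbs

lemma klg_nonneg (θs ρ θ : ℝ) : 0 ≤ klg θs ρ θ :=
  integral_mul_log_div_nonneg (fun x => (gstar_pos θs ρ x).le) (gmod_pos θ) (integrable_gstar θs ρ)
    (integrable_gmod θ) (integrable_gstar_mul_log_div_gmod θs ρ θ)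
    (by rw [integral_gstar, integral_gmod])

lemma klg_zero_self (θs : ℝ) : klg θs 0 θs = 0 := by
  simp [klg, gstar_zero, div_self (gmod_pos θs _).ne']

lemma abs_eq_of_klg_zero_eq_zero {θs θ : ℝ} (h : klg θs 0 θ = 0) : |θ| = |θs| := by
  have hmod : gmod θs = gmod θ := by
    rw [← gstar_zero]
    exact eq_of_integral_mul_log_div_eq_zero (μ := volume) (continuous_gstar θs 0)
      (continuous_gmod θ) (fun x => (gstar_pos θs 0 x).le) (gmod_pos θ) (integrable_gstar θs 0)
      (integrable_gmod θ) (integrable_gstar_mul_log_div_gmod θs 0 θ)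
      (by rw [integral_gstar, integral_gmod]) h
  have h0 := congrFun hmod 0
  simp only [gmod_eq_stdPdf_mul_cosh, mul_zero, cosh_zero, mul_one, mul_eq_mul_left_iff,
    (stdPdf_pos 0).ne', or_false, exp_eq_exp] at h0
  exact (sq_eq_sq_iff_abs_eq_abs θ θs).1 (by linarith)

lemma abs_eq_of_forall_klObjective_zero_le {θs t : ℝ}
    (h : ∀ θ, klObjective θs 0 t ≤ klObjective θs 0 θ) : |t| = |θs| :=
  abs_eq_of_klg_zero_eq_zero <| le_antisymm
    ((klg_le_klg_iff.2 (h θs)).trans_eq (klg_zero_self θs)) (klg_nonneg θs 0 t)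

lemma abs_gstar_mul_log_cosh_le {θs ρ M : ℝ} (hM : |θs| * (|ρ| + 1) ≤ M) (θ x : ℝ) :
    |gstar θs ρ x * log (cosh (θ * x))| ≤ |θ| * (2 * exp (M ^ 2 / 2) * (gmod M x * |x|)) := by
  have hlog : |log (cosh (θ * x))| ≤ |θ| * |x| := by
    simpa [abs_mul] using abs_log_cosh_le (θ * x)
  have := gmod_pos M x
  rw [abs_mul, abs_of_pos (gstar_pos θs ρ x)]
  calc gstar θs ρ x * |log (cosh (θ * x))|
      ≤ 2 * exp (M ^ 2 / 2) * gmod M x * (|θ| * |x|) :=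
        mul_le_mul (gstar_le_gmod hM x) hlog (abs_nonneg _) (by positivity)
    _ = |θ| * (2 * exp (M ^ 2 / 2) * (gmod M x * |x|)) := by ring

lemma continuous_klObjective (θs : ℝ) : Continuous (uncurry (klObjective θs)) := by
  have hT : Continuous fun p : ℝ × ℝ => ∫ x, gstar θs p.1 x * log (cosh (p.2 * x)) := by
    refine continuous_iff_continuousAt.2 fun p₀ => ?_
    set M := |θs| * (|p₀.1| + 1 + 1)
    set B := |p₀.2| + 1
    have hnear : ∀ᶠ p in 𝓝 p₀, |p.1| < |p₀.1| + 1 ∧ |p.2| < B :=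
      (continuousAt_fst.abs.eventually_lt continuousAt_const (lt_add_one _)).and
        (continuousAt_snd.abs.eventually_lt continuousAt_const (lt_add_one _))
    refine continuousAt_of_dominated
      (bound := fun x => B * (2 * exp (M ^ 2 / 2) * (gmod M x * |x|)))
      (Eventually.of_forall fun p => (integrable_gstar_mul_log_cosh θs p.1 p.2).aestronglyMeasurable)
      (hnear.mono fun p hp => ae_of_all _ fun x => ?_)
      (((integrable_gmod_mul_abs M).const_mul _).const_mul _) (ae_of_all _ fun x => ?_)
    · have hM : |θs| * (|p.1| + 1) ≤ M :=
        mul_le_mul_of_nonneg_left (by linarith [hp.1]) (abs_nonneg θs)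
      have := gmod_pos M x
      exact (abs_gstar_mul_log_cosh_le hM p.2 x).trans (by gcongr; exact hp.2.le)
    · have hg : Continuous fun p : ℝ × ℝ => gstar θs p.1 x := by unfold gstar; fun_prop
      exact (hg.mul ((by fun_prop : Continuous fun p : ℝ × ℝ => cosh (p.2 * x)).log
        fun p => (cosh_pos _).ne')).continuousAt
  exact (by fun_prop : Continuous fun p : ℝ × ℝ => p.2 ^ 2 / 2).sub hT

lemma exists_integral_gstar_mul_log_cosh_le (θs : ℝ) :
    ∃ C, ∀ ρ θ, |ρ| ≤ 1 → ∫ x, gstar θs ρ x * log (cosh (θ * x)) ≤ |θ| * C := by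
  set M := 2 * |θs|
  refine ⟨∫ x, 2 * exp (M ^ 2 / 2) * (gmod M x * |x|), fun ρ θ hρ => ?_⟩
  have hM : |θs| * (|ρ| + 1) ≤ M := by nlinarith [abs_nonneg θs]
  rw [← integral_const_mul]
  exact integral_mono (integrable_gstar_mul_log_cosh θs ρ θ)
    (((integrable_gmod_mul_abs M).const_mul _).const_mul _)
    fun x => (le_abs_self _).trans (abs_gstar_mul_log_cosh_le hM θ x)

lemma exists_abs_le_of_forall_klObjective_le (θs : ℝ) :
    ∃ R, ∀ ρ t, |ρ| ≤ 1 → (∀ θ, klObjective θs ρ t ≤ klObjective θs ρ θ) → |t| ≤ R := by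
  obtain ⟨C, hC⟩ := exists_integral_gstar_mul_log_cosh_le θs
  refine ⟨|θs| + 2 * |C|, fun ρ t hρ ht => ?_⟩
  have hT₀ : 0 ≤ ∫ x, gstar θs ρ x * log (cosh (θs * x)) :=
    integral_nonneg fun x => mul_nonneg (gstar_pos θs ρ x).le (log_nonneg (one_le_cosh _))
  have hmin := ht θs
  have hTt := hC ρ t hρ
  unfold klObjective at hmin
  by_contra! hlt
  nlinarith [sq_abs t, sq_abs θs, abs_nonneg t, abs_nonneg θs, le_abs_self C, abs_nonneg C]

lemma tendsto_of_forall_le_of_unique {X Y : Type*} [TopologicalSpace X] [TopologicalSpace Y]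
    {F : X → Y → ℝ} (hF : Continuous (uncurry F)) {l : Filter X} {x₀ : X} (hl : l ≤ 𝓝 x₀)
    {K : Set Y} (hK : IsCompact K) {f : X → Y} {y₀ : Y} (hfK : ∀ᶠ x in l, f x ∈ K)
    (hf : ∀ᶠ x in l, ∀ y, F x (f x) ≤ F x y)
    (huniq : ∀ y ∈ K, (∀ y', F x₀ y ≤ F x₀ y') → y = y₀) : Tendsto f l (𝓝 y₀) := by
  refine hK.tendsto_nhds_of_unique_mapClusterPt hfK fun y hyK hy => huniq y hyK fun y' => ?_
  have hcluster : MapClusterPt (x₀, y) l fun x => (x, f x) := by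
    rw [((𝓝 x₀).basis_sets.prod_nhds (𝓝 y).basis_sets).mapClusterPt_iff_frequently]
    rintro ⟨s, t⟩ ⟨hs, ht⟩
    exact ((mapClusterPt_iff_frequently.1 hy t ht).and_eventually (hl hs)).mono
      fun x hx => ⟨hx.2, hx.1⟩
  have hclosed : IsClosed {p : X × Y | F p.1 p.2 ≤ F p.1 y'} :=
    isClosed_le hF (hF.comp (continuous_fst.prodMk continuous_const))
  exact hclosed.mem_of_mapClusterPt hcluster (hf.mono fun x hx => hx y')

theorem kl_projection_tendsto_true_parameter_general (θs : ℝ) (θbar : ℝ → ℝ)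
    (hmin : ∀ ρ > (0 : ℝ), 0 ≤ θbar ρ ∧ ∀ θ, klg θs ρ (θbar ρ) ≤ klg θs ρ θ) :
    Filter.Tendsto θbar (nhdsWithin 0 (Set.Ioi 0)) (nhds |θs|) := by
  obtain ⟨R, hR⟩ := exists_abs_le_of_forall_klObjective_le θs
  have hminObj : ∀ ρ > 0, ∀ θ, klObjective θs ρ (θbar ρ) ≤ klObjective θs ρ θ :=
    fun ρ hρ θ => klg_le_klg_iff.1 ((hmin ρ hρ).2 θ)
  have hsmall : ∀ᶠ ρ in 𝓝[>] (0 : ℝ), 0 < ρ ∧ |ρ| ≤ 1 :=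
    Filter.mem_of_superset (Ioo_mem_nhdsGT one_pos) fun ρ hρ => ⟨hρ.1, (abs_of_pos hρ.1).trans_le hρ.2.le⟩
  refine tendsto_of_forall_le_of_unique (continuous_klObjective θs) nhdsWithin_le_nhds
    (isCompact_Icc (a := 0) (b := R)) ?_ (hsmall.mono fun ρ hρ => hminObj ρ hρ.1) ?_
  · exact hsmall.mono fun ρ hρ =>
      ⟨(hmin ρ hρ.1).1, (le_abs_self _).trans (hR ρ _ hρ.2 (hminObj ρ hρ.1))⟩
  · intro t ht htmin
    rw [← abs_of_nonneg ht.1]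
    exact abs_eq_of_forall_klObjective_zero_le htmin

/-- The pseudo-true parameter converges to the true parameter as the component
separation vanishes: if for each `ρ > 0`, `θ̄(ρ)` is a nonnegative minimizer of
`θ ↦ KL(g*_ρ ‖ g_θ)`, then `θ̄(ρ) → |θ*|` as `ρ → 0⁺`. -/
theorem kl_projection_tendsto_true_parameter (θs : ℝ) (hθs : θs ≠ 0) (θbar : ℝ → ℝ)
    (hmin : ∀ ρ > (0 : ℝ), 0 ≤ θbar ρ ∧ ∀ θ, klg θs ρ (θbar ρ) ≤ klg θs ρ θ) :
    Filter.Tendsto θbar (nhdsWithin 0 (Set.Ioi 0)) (nhds |θs|) :=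
  kl_projection_tendsto_true_parameter_general θs θbar hmin

end
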